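/- arXiv:0909.1097 — 2 statements merged into one kernel-verified Lean document; each statement's English description precedes it below -/
import Mathlib

section
/- Let β ∈ ℝ, γ > 0, and let μ, ν be compactly supported probability measures on ℝ with infinite support such that μ = Φ_{β,γ}[ν]. Then for every n ≥ 1, L_μ[P^μ_n] = P^ν_{n−1}, i.e. applying L_μ to the n-th monic orthogonal polynomial of μ gives the (n−1)-st monic orthogonal polynomial of ν. -/
open MeasureTheory Polynomial

/-- Moments of a measure on ℝ. -/
noncomputable def mom (ρ : Measure ℝ) (k : ℕ) : ℝ := ∫ x, x ^ k ∂ρ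

/-- The operator `L_ρ` on polynomials, defined via the moment sequence `m` of `ρ`:
`L[x^n] = Σ_{k=0}^{n-1} m_{n-1-k} x^k`. -/
noncomputable def Lop (m : ℕ → ℝ) (f : Polynomial ℝ) : Polynomial ℝ :=
  f.sum fun n a => C a * ∑ k ∈ Finset.range n, C (m (n - 1 - k)) * X ^ k

/-- A measure has compact support. -/
def CompactSupp (μ : Measure ℝ) : Prop := ∃ K : Set ℝ, IsCompact K ∧ μ Kᶜ = 0

/-- The (topological) support of a measure on ℝ. -/
def msupport (μ : Measure ℝ) : Set ℝ := {x | ∀ U ∈ nhds x, μ U ≠ 0}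

/-- `JacobiShift β γ mν mμ` says (at the level of moment sequences) that `μ = Φ_{β,γ}[ν]`. -/
def JacobiShift (β γ : ℝ) (mν mμ : ℕ → ℝ) : Prop :=
  ∀ n : ℕ, 1 ≤ n →
    mμ n = β * mμ (n - 1) + γ * ∑ i ∈ Finset.range (n - 1), mν i * mμ (n - 2 - i)

/-- `P` is the family of monic orthogonal polynomials of `ρ`. -/
def IsMonicOPS (ρ : Measure ℝ) (P : ℕ → Polynomial ℝ) : Prop :=
  (∀ n, (P n).Monic) ∧ (∀ n, (P n).natDegree = n) ∧
  ∀ n m : ℕ, n ≠ m → ∫ x, (P n).eval x * (P m).eval x ∂ρ = 0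

/-!
Integration of polynomials against a compactly supported measure is the moment functional
`p ↦ ∑ pₖ mₖ`, so the argument is linear algebra on moment sequences. Read on monomials, the
relation `μ = Φ_{β,γ}[ν]` gives
`γ ∫ L_μ[f] xʲ dν = ∫ f x^{j+1} dμ - β ∫ f xʲ dμ - γ ∑_{i<j} m^ν_i ∫ f x^{j-1-i} dμ`,
so `L_μ[P^μ_n]` is `ν`-orthogonal to `xʲ` for `j < n - 1`. As `m^μ_0 = 1`, `L_μ[P^μ_n]` is monic of
degree `n - 1`, and a monic polynomial of degree `d` orthogonal to all lower powers is `P^ν_d`: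
the difference is orthogonal to itself, and `∫ Q² dν = 0` forces `Q = 0` because `Q` then
vanishes on the infinite support of `ν`.
-/

section MomentFunctional

variable {R : Type*} [CommRing R]

noncomputable def momentFun (m : ℕ → R) : R[X] →ₗ[R] R :=
  lsum fun n => m n • LinearMap.id

lemma momentFun_C_mul_X_pow (m : ℕ → R) (n : ℕ) (a : R) :
    momentFun m (C a * X ^ n) = a * m n := by
  rw [C_mul_X_pow_eq_monomial, mul_comm]
  simp [momentFun, sum_monomial_index]

lemma map_mul_eq_zero_of_map_mul_X_pow (φ : R[X] →ₗ[R] R) {p q : R[X]} {d : ℕ}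
    (hp : ∀ j < d, φ (p * X ^ j) = 0) (hq : q.degree < d) : φ (p * q) = 0 := by
  classical
  suffices degreeLT R d ≤ LinearMap.ker (φ ∘ₗ LinearMap.mulLeft R p) from this (mem_degreeLT.2 hq)
  rw [degreeLT_eq_span_X_pow, Submodule.span_le, Finset.coe_image, Set.image_subset_iff]
  exact fun j hj => hp j (Finset.mem_range.1 hj)

lemma degree_sub_C_coeff_mul_lt {p q : R[X]} {d : ℕ} (hp : p.Monic) (hpd : p.natDegree = d)
    (hq : q.degree < ↑(d + 1)) : (q - C (q.coeff d) * p).degree < d := by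
  rw [degree_lt_iff_coeff_zero] at hq ⊢
  intro k hk
  rw [coeff_sub, coeff_C_mul]
  rcases hk.eq_or_lt with h | h
  · rw [← h, ← hpd, hp.coeff_natDegree, mul_one, sub_self]
  · rw [hq k h, coeff_eq_zero_of_natDegree_lt (p := p) (by omega), mul_zero, sub_zero]

structure IsMonicOrthogonalFamily (φ : R[X] →ₗ[R] R) (P : ℕ → R[X]) : Prop where
  monic : ∀ n, (P n).Monic
  natDegree_eq : ∀ n, (P n).natDegree = n
  map_mul_eq_zero : ∀ n m, m < n → φ (P n * P m) = 0

namespace IsMonicOrthogonalFamily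

variable {φ : R[X] →ₗ[R] R} {P : ℕ → R[X]}

lemma map_mul_eq_zero_of_degree_lt (hP : IsMonicOrthogonalFamily φ P) {n : ℕ} {q : R[X]}
    (hq : q.degree < n) : φ (P n * q) = 0 := by
  suffices ∀ d ≤ n, ∀ q : R[X], q.degree < d → φ (P n * q) = 0 from this n le_rfl q hq
  intro d
  induction d with
  | zero => intro _ q hq; simp [degree_eq_bot.1 (Nat.WithBot.lt_zero_iff.1 hq)]
  | succ d ih =>
    intro hd q hq
    have hr := ih (by omega) _ (degree_sub_C_coeff_mul_lt (hP.monic d) (hP.natDegree_eq d) hq)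
    rwa [mul_sub, map_sub, mul_left_comm, ← smul_eq_C_mul, map_smul,
      hP.map_mul_eq_zero n d (by omega), smul_zero, sub_zero] at hr

lemma map_mul_X_pow_eq_zero (hP : IsMonicOrthogonalFamily φ P) {n k : ℕ} (hk : k < n) :
    φ (P n * X ^ k) = 0 :=
  hP.map_mul_eq_zero_of_degree_lt ((degree_X_pow_le k).trans_lt (by exact_mod_cast hk))

lemma eq_of_monic_of_map_mul_X_pow_eq_zero (hP : IsMonicOrthogonalFamily φ P)
    (hφ : ∀ Q : R[X], φ (Q * Q) = 0 → Q = 0) {p : R[X]} {d : ℕ} (hpm : p.Monic)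
    (hpd : p.natDegree = d) (hp : ∀ j < d, φ (p * X ^ j) = 0) : p = P d := by
  have hlt : (p - P d).degree < d := by
    have hc : p.coeff d = 1 := hpd ▸ hpm.coeff_natDegree
    have hp' : p.degree < ↑(d + 1) :=
      degree_le_natDegree.trans_lt (by rw [hpd]; exact_mod_cast d.lt_succ_self)
    simpa [hc] using degree_sub_C_coeff_mul_lt (hP.monic d) (hP.natDegree_eq d) hp'
  have hsub : ∀ j < d, φ ((p - P d) * X ^ j) = 0 := fun j hj => by
    rw [sub_mul, map_sub, hp j hj, hP.map_mul_X_pow_eq_zero hj, sub_zero]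
  exact sub_eq_zero.1 (hφ _ (map_mul_eq_zero_of_map_mul_X_pow φ hsub hlt))

end IsMonicOrthogonalFamily

end MomentFunctional

section Lop

variable (m : ℕ → ℝ)

lemma Lop_add (f g : ℝ[X]) : Lop m (f + g) = Lop m f + Lop m g :=
  sum_add_index _ _ _ (fun _ => by simp) fun _ _ _ => by rw [C_add, add_mul]

lemma Lop_monomial (n : ℕ) (a : ℝ) :
    Lop m (monomial n a) = C a * ∑ k ∈ Finset.range n, C (m (n - 1 - k)) * X ^ k :=
  sum_monomial_index _ _ (by simp)

lemma coeff_Lop (f : ℝ[X]) (t : ℕ) :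
    (Lop m f).coeff t = f.sum fun n a => if t < n then a * m (n - 1 - t) else 0 := by
  simp only [Lop, Polynomial.sum, finsetSum_coeff, coeff_C_mul, coeff_X_pow, mul_ite, mul_one,
    mul_zero, Finset.sum_ite_eq, Finset.mem_range]

lemma natDegree_Lop_le (f : ℝ[X]) : (Lop m f).natDegree ≤ f.natDegree - 1 := by
  refine natDegree_le_iff_coeff_eq_zero.2 fun t ht => ?_
  rw [coeff_Lop]
  refine Finset.sum_eq_zero fun n hn => if_neg ?_
  have := le_natDegree_of_mem_supp n hn
  omega

lemma coeff_Lop_natDegree_sub_one {f : ℝ[X]} (hf : 1 ≤ f.natDegree) :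
    (Lop m f).coeff (f.natDegree - 1) = f.leadingCoeff * m 0 := by
  rw [coeff_Lop, Polynomial.sum, Finset.sum_eq_single f.natDegree]
  · rw [if_pos (by omega), Nat.sub_self]; rfl
  · intro n hn hne
    have := le_natDegree_of_mem_supp n hn
    exact if_neg (by omega)
  · intro h
    rw [mem_support_iff, not_not] at h
    simp [h]

lemma natDegree_Lop_of_monic (hm : m 0 = 1) {f : ℝ[X]} (hf : f.Monic) (hdeg : 1 ≤ f.natDegree) :
    (Lop m f).natDegree = f.natDegree - 1 := by
  refine natDegree_eq_of_le_of_coeff_ne_zero (natDegree_Lop_le m f) ?_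
  rw [coeff_Lop_natDegree_sub_one m hdeg, hf.leadingCoeff, hm, one_mul]
  exact one_ne_zero

lemma monic_Lop (hm : m 0 = 1) {f : ℝ[X]} (hf : f.Monic) (hdeg : 1 ≤ f.natDegree) :
    (Lop m f).Monic := by
  rw [Monic, leadingCoeff, natDegree_Lop_of_monic m hm hf hdeg, coeff_Lop_natDegree_sub_one m hdeg,
    hf.leadingCoeff, hm, one_mul]

end Lop

namespace JacobiShift

variable {β γ : ℝ} {mν mμ : ℕ → ℝ}

lemma moment_add_succ (hshift : JacobiShift β γ mν mμ) (n j : ℕ) :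
    mμ (n + (j + 1)) = β * mμ (n + j) + γ * ∑ i ∈ Finset.range j, mν i * mμ (n + (j - 1 - i))
      + γ * ∑ k ∈ Finset.range n, mμ (n - 1 - k) * mν (k + j) := by
  have hsplit : ∑ i ∈ Finset.range (n + j), mν i * mμ (n + (j + 1) - 2 - i)
      = ∑ i ∈ Finset.range j, mν i * mμ (n + (j - 1 - i))
        + ∑ k ∈ Finset.range n, mμ (n - 1 - k) * mν (k + j) := by
    rw [add_comm n j, Finset.sum_range_add]
    congr 1
    · refine Finset.sum_congr rfl fun i hi => ?_
      rw [Finset.mem_range] at hi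
      congr 2
      omega
    · refine Finset.sum_congr rfl fun k hk => ?_
      rw [Finset.mem_range] at hk
      rw [mul_comm, add_comm k j]
      congr 2
      omega
  rw [hshift (n + (j + 1)) (by omega), show n + (j + 1) - 1 = n + j by omega, hsplit]
  ring

lemma momentFun_Lop_mul_X_pow (hshift : JacobiShift β γ mν mμ) (f : ℝ[X]) (j : ℕ) :
    γ * momentFun mν (Lop mμ f * X ^ j) = momentFun mμ (f * X ^ (j + 1))
      - β * momentFun mμ (f * X ^ j)
      - γ * ∑ i ∈ Finset.range j, mν i * momentFun mμ (f * X ^ (j - 1 - i)) := by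
  induction f using Polynomial.induction_on' with
  | add f g hf hg =>
    simp only [Lop_add, add_mul, map_add, mul_add, Finset.sum_add_distrib]
    linarith
  | monomial n a =>
    rw [Lop_monomial, ← C_mul_X_pow_eq_monomial]
    simp only [Finset.mul_sum, Finset.sum_mul, mul_assoc, ← pow_add]
    simp only [← mul_assoc, ← C_mul, map_sum, momentFun_C_mul_X_pow]
    rw [hshift.moment_add_succ n j]
    simp only [mul_add, Finset.mul_sum, mul_comm, mul_assoc, mul_left_comm]
    abel

lemma momentFun_Lop_mul_X_pow_eq_zero (hshift : JacobiShift β γ mν mμ) (hγ : γ ≠ 0) {f : ℝ[X]}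
    {n : ℕ} (hf : ∀ k < n, momentFun mμ (f * X ^ k) = 0) {j : ℕ} (hj : j + 1 < n) :
    momentFun mν (Lop mμ f * X ^ j) = 0 := by
  have h := hshift.momentFun_Lop_mul_X_pow f j
  rw [hf _ hj, hf j (by omega), Finset.sum_eq_zero fun i _ => by rw [hf _ (by omega), mul_zero],
    mul_zero, sub_zero, mul_zero, sub_zero] at h
  exact (mul_eq_zero.1 h).resolve_left hγ

end JacobiShift

section Measure

variable {ρ : Measure ℝ}

lemma eq_zero_of_mem_msupport {f : ℝ → ℝ} (hf : Continuous f) (hae : f =ᵐ[ρ] 0) {x : ℝ}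
    (hx : x ∈ msupport ρ) : f x = 0 := by
  by_contra h
  exact hx _ ((isOpen_ne_fun hf continuous_const).mem_nhds h) (ae_iff.1 hae)

variable [IsFiniteMeasure ρ]

lemma CompactSupp.integrable_eval (hcs : CompactSupp ρ) (p : ℝ[X]) :
    Integrable (fun x => p.eval x) ρ := by
  obtain ⟨K, hK, hKc⟩ := hcs
  obtain ⟨B, hB⟩ := hK.exists_bound_of_continuousOn p.continuous.continuousOn
  refine (integrable_const B).mono' p.continuous.aestronglyMeasurable ?_
  filter_upwards [measure_eq_zero_iff_ae_notMem.1 hKc] with x hx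
  exact hB x (by simpa using hx)

lemma CompactSupp.integral_eval (hcs : CompactSupp ρ) (p : ℝ[X]) :
    ∫ x, p.eval x ∂ρ = momentFun (mom ρ) p := by
  have hpow : ∀ n, Integrable (fun x : ℝ => x ^ n) ρ := fun n => by
    simpa using hcs.integrable_eval (X ^ n)
  simp only [eval_eq_sum, Polynomial.sum]
  rw [integral_finsetSum _ fun n _ => (hpow n).const_mul _]
  simp only [momentFun, lsum_apply, Polynomial.sum, integral_const_mul, mom, LinearMap.smul_apply,
    LinearMap.id_apply, smul_eq_mul]
  exact Finset.sum_congr rfl fun _ _ => mul_comm _ _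

lemma CompactSupp.eq_zero_of_momentFun_mul_self (hcs : CompactSupp ρ)
    (hinf : (msupport ρ).Infinite) {Q : ℝ[X]} (hQ : momentFun (mom ρ) (Q * Q) = 0) : Q = 0 := by
  rw [← hcs.integral_eval] at hQ
  have hae : (fun x => (Q * Q).eval x) =ᵐ[ρ] 0 :=
    (integral_eq_zero_iff_of_nonneg (fun x => by simpa using mul_self_nonneg (Q.eval x))
      (hcs.integrable_eval _)).1 hQ
  refine Q.eq_zero_of_infinite_isRoot (hinf.mono fun x hx => ?_)
  simpa using eq_zero_of_mem_msupport (Q * Q).continuous hae hx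

lemma IsMonicOPS.isMonicOrthogonalFamily (hcs : CompactSupp ρ) {P : ℕ → ℝ[X]}
    (hP : IsMonicOPS ρ P) : IsMonicOrthogonalFamily (momentFun (mom ρ)) P where
  monic := hP.1
  natDegree_eq := hP.2.1
  map_mul_eq_zero n m hmn := by
    rw [← hcs.integral_eval]
    simpa using hP.2.2 n m hmn.ne'

end Measure

theorem stmt16_general (μ ν : Measure ℝ) [IsProbabilityMeasure μ] [IsProbabilityMeasure ν]
    (hcsμ : CompactSupp μ) (hcsν : CompactSupp ν)
    (hinfν : (msupport ν).Infinite)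
    (β : ℝ) (γ : ℝ) (hγ : 0 < γ)
    (hshift : JacobiShift β γ (mom ν) (mom μ))
    (Pμ Pν : ℕ → Polynomial ℝ) (hPμ : IsMonicOPS μ Pμ) (hPν : IsMonicOPS ν Pν) :
    ∀ n : ℕ, 1 ≤ n → Lop (mom μ) (Pμ n) = Pν (n - 1) := by
  intro n hn
  have hμ := hPμ.isMonicOrthogonalFamily hcsμ
  have hm0 : mom μ 0 = 1 := by simp [mom]
  have hdeg : 1 ≤ (Pμ n).natDegree := (hμ.natDegree_eq n).symm ▸ hn
  refine (hPν.isMonicOrthogonalFamily hcsν).eq_of_monic_of_map_mul_X_pow_eq_zero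
    (fun _ => hcsν.eq_zero_of_momentFun_mul_self hinfν) (monic_Lop _ hm0 (hμ.monic n) hdeg)
    (by rw [natDegree_Lop_of_monic _ hm0 (hμ.monic n) hdeg, hμ.natDegree_eq]) fun j hj => ?_
  exact hshift.momentFun_Lop_mul_X_pow_eq_zero hγ.ne' (fun k => hμ.map_mul_X_pow_eq_zero) (by omega)

theorem stmt16 (μ ν : Measure ℝ) [IsProbabilityMeasure μ] [IsProbabilityMeasure ν]
    (hcsμ : CompactSupp μ) (hcsν : CompactSupp ν)
    (hinfμ : (msupport μ).Infinite) (hinfν : (msupport ν).Infinite)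
    (β : ℝ) (γ : ℝ) (hγ : 0 < γ)
    (hshift : JacobiShift β γ (mom ν) (mom μ))
    (Pμ Pν : ℕ → Polynomial ℝ) (hPμ : IsMonicOPS μ Pμ) (hPν : IsMonicOPS ν Pν) :
    ∀ n : ℕ, 1 ≤ n → Lop (mom μ) (Pμ n) = Pν (n - 1) :=
  stmt16_general μ ν hcsμ hcsν hinfν β γ hγ hshift Pμ Pν hPμ hPν
end

section
/- Let τ, ν, μ be compactly supported probability measures on ℝ with infinite support, let β, β₀ ∈ ℝ and γ, γ₁ > 0, and suppose ν = Φ_{β₀,γ₁}[τ] and μ = Φ_{β,γ}[ν] (so ν is obtained from μ by stripping the first Jacobi parameters, and τ by stripping twice). Then the monic orthogonal polynomials satisfy, for every n ≥ 1, x P^ν_n(x) = P^μ_{n+1}(x) + β P^ν_n(x) + γ P^τ_{n−1}(x). -/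
open MeasureTheory Polynomial

namespace Stmt18

def favG (b a : ℕ → ℝ) : ℕ → ℕ → ℝ
  | 0, n => if n = 0 then 1 else 0
  | m+1, n => favG b a m (n+1) + b n * favG b a m n +
      (if n = 0 then 0 else a n * favG b a m (n-1))

def prepb (β : ℝ) (b : ℕ → ℝ) : ℕ → ℝ := fun n => if n = 0 then β else b (n-1)
def prepa (γ : ℝ) (a : ℕ → ℝ) : ℕ → ℝ := fun n => if n = 1 then γ else a (n-1)

lemma favG_zero (b a : ℕ → ℝ) (n : ℕ) : favG b a 0 n = if n = 0 then 1 else 0 := rfl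

lemma favG_succ (b a : ℕ → ℝ) (m n : ℕ) :
    favG b a (m+1) n = favG b a m (n+1) + b n * favG b a m n +
      (if n = 0 then 0 else a n * favG b a m (n-1)) := rfl

lemma favG_eq_zero (b a : ℕ → ℝ) : ∀ m n, m < n → favG b a m n = 0 := by
  intro m
  induction m with
  | zero => intro n hn; simp [favG_zero]; omega
  | succ m ih =>
    intro n hn
    rw [favG_succ, ih (n+1) (by omega), ih n (by omega)]
    have hn0 : n ≠ 0 := by omega
    simp [hn0, ih (n-1) (by omega)]

/-- first-return decomposition. -/
lemma favG_first_return (b a : ℕ → ℝ) (β γ : ℝ) : ∀ m n : ℕ,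
    favG (prepb β b) (prepa γ a) (m+1) (n+1)
      = γ * ∑ i ∈ Finset.range (m+1),
          favG b a i n * favG (prepb β b) (prepa γ a) (m - i) 0 := by
  intro m
  induction m with
  | zero =>
    intro n
    rcases Nat.eq_zero_or_pos n with h | h
    · subst h
      simp [favG_succ, favG_zero, prepa, prepb]
    · have hn : n ≠ 0 := by omega
      simp [favG_succ, favG_zero, hn, prepa, prepb]
  | succ m ih =>
    intro n
    rw [favG_succ]
    rcases Nat.eq_zero_or_pos n with h | h
    · subst h
      rw [ih 1, ih 0]
      have hb : prepb β b 1 = b 0 := by simp [prepb]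
      have ha : prepa γ a 1 = γ := by simp [prepa]
      rw [hb, ha, Finset.sum_range_succ' _ (m+1)]
      have hcong : ∀ i ∈ Finset.range (m+1),
          favG b a (i+1) 0 * favG (prepb β b) (prepa γ a) (m + 1 - (i+1)) 0
          = favG b a i 1 * favG (prepb β b) (prepa γ a) (m - i) 0
            + b 0 * (favG b a i 0 * favG (prepb β b) (prepa γ a) (m - i) 0) := by
        intro i hi
        have h1 : favG b a (i+1) 0 = favG b a i 1 + b 0 * favG b a i 0 := by
          rw [favG_succ]; simp
        have h2 : m + 1 - (i+1) = m - i := by omega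
        rw [h1, h2]; ring
      rw [Finset.sum_congr rfl hcong, Finset.sum_add_distrib, ← Finset.mul_sum]
      simp only [favG_zero, if_pos rfl, Nat.sub_zero, one_mul]
      norm_num
      ring
    · obtain ⟨k, rfl⟩ : ∃ k, n = k + 1 := ⟨n - 1, by omega⟩
      simp only [Nat.add_sub_cancel]
      rw [ih (k+1+1), ih (k+1), ih k]
      have hb : prepb β b (k+1+1) = b (k+1) := by simp [prepb]
      have ha : prepa γ a (k+1+1) = a (k+1) := by simp [prepa]
      rw [hb, ha, Finset.sum_range_succ' _ (m+1)]
      have hcong : ∀ i ∈ Finset.range (m+1),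
          favG b a (i+1) (k+1) * favG (prepb β b) (prepa γ a) (m + 1 - (i+1)) 0
          = favG b a i (k+1+1) * favG (prepb β b) (prepa γ a) (m - i) 0
            + b (k+1) * (favG b a i (k+1) * favG (prepb β b) (prepa γ a) (m - i) 0)
            + a (k+1) * (favG b a i k * favG (prepb β b) (prepa γ a) (m - i) 0) := by
        intro i hi
        have h1 : favG b a (i+1) (k+1) = favG b a i (k+1+1) + b (k+1) * favG b a i (k+1)
            + a (k+1) * favG b a i k := by
          rw [favG_succ]; simp
        have h2 : m + 1 - (i+1) = m - i := by omega
        rw [h1, h2]; ring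
      rw [Finset.sum_congr rfl hcong, Finset.sum_add_distrib, Finset.sum_add_distrib,
        ← Finset.mul_sum, ← Finset.mul_sum]
      have h0 : favG b a 0 (k+1) = 0 := by simp [favG_zero]
      rw [h0]
      norm_num
      ring

lemma favG_jacobi (b a : ℕ → ℝ) (β γ : ℝ) :
    JacobiShift β γ (fun k => favG b a k 0)
      (fun k => favG (prepb β b) (prepa γ a) k 0) := by
  intro n hn
  obtain ⟨m, rfl⟩ : ∃ m, n = m + 1 := ⟨n - 1, by omega⟩
  simp only [Nat.add_sub_cancel]
  rw [favG_succ]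
  have hb : prepb β b 0 = β := by simp [prepb]
  rw [hb]
  simp only [if_pos rfl, add_zero]
  cases m with
  | zero => simp [favG_zero]
  | succ m' =>
    rw [favG_first_return]
    have hthis : ∀ i ∈ Finset.range (m'+1),
        favG b a i 0 * favG (prepb β b) (prepa γ a) (m' + 1 + 1 - 2 - i) 0
        = favG b a i 0 * favG (prepb β b) (prepa γ a) (m' - i) 0 := by
      intro i hi
      have h2 : m' + 1 + 1 - 2 - i = m' - i := by omega
      rw [h2]
    rw [Finset.sum_congr rfl hthis]
    norm_num
    ring

lemma jacobiShift_unique (β γ : ℝ) (s m m' : ℕ → ℝ) (h0 : m 0 = m' 0)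
    (h : JacobiShift β γ s m) (h' : JacobiShift β γ s m') : ∀ n, m n = m' n := by
  intro n
  induction n using Nat.strong_induction_on with
  | _ n ih =>
    cases n with
    | zero => exact h0
    | succ k =>
      rw [h (k+1) (by omega), h' (k+1) (by omega)]
      rw [ih (k+1-1) (by omega)]
      congr 1
      congr 1
      apply Finset.sum_congr rfl
      intro i hi
      rw [ih (k+1-2-i) (by omega)]

noncomputable def favP (b a : ℕ → ℝ) : ℕ → ℝ[X]
  | 0 => 1
  | 1 => X - C (b 0)
  | (n+2) => (X - C (b (n+1))) * favP b a (n+1) - C (a (n+1)) * favP b a n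

lemma favP_zero (b a : ℕ → ℝ) : favP b a 0 = 1 := rfl
lemma favP_one (b a : ℕ → ℝ) : favP b a 1 = X - C (b 0) := rfl
lemma favP_add_two (b a : ℕ → ℝ) (n : ℕ) :
    favP b a (n+2) = (X - C (b (n+1))) * favP b a (n+1) - C (a (n+1)) * favP b a n := rfl

lemma favP_monic_deg (b a : ℕ → ℝ) : ∀ n, (favP b a n).Monic ∧ (favP b a n).natDegree = n := by
  intro n
  induction n using Nat.twoStepInduction with
  | zero => constructor <;> simp [favP_zero, monic_one]
  | one =>
    refine ⟨?_, ?_⟩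
    · simpa [favP_one] using monic_X_sub_C (b 0)
    · simp [favP_one]
  | more n ih1 ih2 =>
    rw [favP_add_two]
    have hm1 : ((X - C (b (n+1))) * favP b a (n+1)).Monic :=
      (monic_X_sub_C _).mul ih2.1
    have hd1 : ((X - C (b (n+1))) * favP b a (n+1)).natDegree = n + 2 := by
      rw [natDegree_mul (monic_X_sub_C _).ne_zero ih2.1.ne_zero, natDegree_X_sub_C, ih2.2]
      omega
    have hd2 : (C (a (n+1)) * favP b a n).degree < ((X - C (b (n+1))) * favP b a (n+1)).degree := by
      apply lt_of_le_of_lt (degree_mul_le _ _)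
      have h1 : (C (a (n+1))).degree ≤ 0 := degree_C_le
      have h2 : (favP b a n).degree ≤ (n : WithBot ℕ) := by
        conv_rhs => rw [← ih1.2]
        exact degree_le_natDegree
      have h3 : ((X - C (b (n+1))) * favP b a (n+1)).degree = ((n+2 : ℕ) : WithBot ℕ) := by
        rw [degree_eq_natDegree hm1.ne_zero, hd1]
      rw [h3]
      refine lt_of_le_of_lt (add_le_add h1 h2) ?_
      rw [zero_add]
      exact_mod_cast by omega
    constructor
    · exact hm1.sub_of_left hd2
    · rw [natDegree_eq_of_degree_eq (degree_sub_eq_left_of_degree_lt hd2), hd1]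

/-- The associated-polynomial identity, purely algebraically. -/
lemma favP_assoc (b a : ℕ → ℝ) (β γ β₀ γ₁ : ℝ) : ∀ n : ℕ,
    favP (prepb β (prepb β₀ b)) (prepa γ (prepa γ₁ a)) (n+2)
      = (X - C β) * favP (prepb β₀ b) (prepa γ₁ a) (n+1) - C γ * favP b a n := by
  intro n
  induction n using Nat.twoStepInduction with
  | zero =>
    norm_num [favP_add_two, favP_one, favP_zero, prepb, prepa]
    ring
  | one =>
    show favP _ _ (1+2) = _
    norm_num [favP_add_two, favP_one, favP_zero, prepb, prepa]
    ring
  | more n ih1 ih2 =>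
    show favP _ _ (n+2+2) = _
    rw [favP_add_two, ih2, ih1]
    have e1 : prepb β (prepb β₀ b) (n+2+1) = prepb β₀ b (n+2) := by simp [prepb]
    have e2 : prepa γ (prepa γ₁ a) (n+2+1) = prepa γ₁ a (n+2) := by simp [prepa]
    have e3 : prepb β₀ b (n+2) = b (n+1) := by simp [prepb]
    have e4 : prepa γ₁ a (n+2) = a (n+1) := by simp [prepa]
    rw [e1, e2]
    have hν : favP (prepb β₀ b) (prepa γ₁ a) (n+1+2)
        = (X - C (prepb β₀ b (n+2))) * favP (prepb β₀ b) (prepa γ₁ a) (n+2)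
          - C (prepa γ₁ a (n+2)) * favP (prepb β₀ b) (prepa γ₁ a) (n+1) := favP_add_two _ _ _
    have hτ : favP b a (n+2) = (X - C (b (n+1))) * favP b a (n+1) - C (a (n+1)) * favP b a n :=
      favP_add_two _ _ _
    rw [hν, hτ, e3, e4]
    ring

variable {ρ : Measure ℝ}

lemma integrable_poly [IsProbabilityMeasure ρ] (hcs : CompactSupp ρ) (p : ℝ[X]) :
    Integrable (fun x => p.eval x) ρ := by
  obtain ⟨K, hK, hKc⟩ := hcs
  obtain ⟨M, hM⟩ := hK.exists_bound_of_continuousOn (p.continuous_aeval.continuousOn)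
  refine Integrable.mono' (integrable_const M) p.continuous_aeval.aestronglyMeasurable ?_
  rw [MeasureTheory.ae_iff]
  refine measure_mono_null (fun x hx => ?_) hKc
  intro hxK
  exact hx (by simpa using hM x hxK)

lemma Ip_add [IsProbabilityMeasure ρ] (hcs : CompactSupp ρ) (p q : ℝ[X]) :
    ∫ x, (p + q).eval x ∂ρ = ∫ x, p.eval x ∂ρ + ∫ x, q.eval x ∂ρ := by
  simp only [eval_add]
  exact integral_add (integrable_poly hcs p) (integrable_poly hcs q)

lemma Ip_sub [IsProbabilityMeasure ρ] (hcs : CompactSupp ρ) (p q : ℝ[X]) :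
    ∫ x, (p - q).eval x ∂ρ = ∫ x, p.eval x ∂ρ - ∫ x, q.eval x ∂ρ := by
  simp only [eval_sub]
  exact integral_sub (integrable_poly hcs p) (integrable_poly hcs q)

lemma Ip_Cmul (c : ℝ) (p : ℝ[X]) :
    ∫ x, (C c * p).eval x ∂ρ = c * ∫ x, p.eval x ∂ρ := by
  simp only [eval_mul, eval_C]
  exact integral_const_mul c _

lemma mom_zero (ρ : Measure ℝ) [IsProbabilityMeasure ρ] : mom ρ 0 = 1 := by
  simp [mom]

lemma int_pow (ρ : Measure ℝ) (m : ℕ) : ∫ x, ((X : ℝ[X]) ^ m).eval x ∂ρ = mom ρ m := by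
  simp [mom]

/-- positive definiteness from infinite support -/
lemma poly_eq_zero_of_integral_sq [IsProbabilityMeasure ρ] (hcs : CompactSupp ρ)
    (hinf : (msupport ρ).Infinite) (p : ℝ[X])
    (h : ∫ x, (p * p).eval x ∂ρ = 0) : p = 0 := by
  by_contra hp
  have hint : Integrable (fun x => p.eval x * p.eval x) ρ := by
    simpa [eval_mul] using integrable_poly hcs (p * p)
  have hnn : 0 ≤ᵐ[ρ] fun x => p.eval x * p.eval x :=
    Filter.Eventually.of_forall fun x => mul_self_nonneg _
  have hae : (fun x => p.eval x * p.eval x) =ᵐ[ρ] 0 := by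
    rw [← integral_eq_zero_iff_of_nonneg_ae hnn hint]
    simpa [eval_mul] using h
  have hnull : ρ {x | p.eval x ≠ 0} = 0 := by
    have h2 := Filter.EventuallyEq.symm hae
    rw [Filter.EventuallyEq, MeasureTheory.ae_iff] at hae
    refine measure_mono_null (fun x hx => ?_) hae
    simp only [Set.mem_setOf_eq] at hx ⊢
    intro hc
    exact hx (mul_self_eq_zero.mp hc)
  have hopen : IsOpen {x | p.eval x ≠ 0} :=
    isOpen_compl_singleton.preimage p.continuous_aeval
  have hsub : msupport ρ ⊆ {x | p.IsRoot x} := by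
    intro x hx
    by_contra hroot
    exact hx _ (hopen.mem_nhds hroot) hnull
  exact hinf ((Polynomial.finite_setOf_isRoot hp).subset hsub)

/-- a polynomial orthogonal to `R 0, …, R N` is orthogonal to every polynomial of
degree at most `N`. -/
lemma ortho_of_ortho_family [IsProbabilityMeasure ρ] (hcs : CompactSupp ρ)
    (R : ℕ → ℝ[X]) (hRm : ∀ k, (R k).Monic) (hRd : ∀ k, (R k).natDegree = k) (f : ℝ[X]) :
    ∀ N, (∀ k ≤ N, ∫ x, (f * R k).eval x ∂ρ = 0) →
      ∀ q : ℝ[X], q.natDegree ≤ N → ∫ x, (f * q).eval x ∂ρ = 0 := by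
  have key : ∀ d N, d ≤ N → (∀ k ≤ N, ∫ x, (f * R k).eval x ∂ρ = 0) →
      ∀ q : ℝ[X], q.natDegree ≤ d → ∫ x, (f * q).eval x ∂ρ = 0 := by
    intro d
    induction d with
    | zero =>
      intro N hdN hor q hq
      have hR0 : R 0 = 1 := by
        have := (hRm 0).natDegree_eq_zero.mp (hRd 0)
        exact this
      have hq' : q = C (q.coeff 0) := eq_C_of_natDegree_le_zero hq
      have : f * q = C (q.coeff 0) * (f * R 0) := by rw [hR0, ← hq']; ring
      rw [this, Ip_Cmul, hor 0 (by omega), mul_zero]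
    | succ d ih =>
      intro N hdN hor q hq
      set c := q.coeff (d + 1) with hc
      set q' := q - C c * R (d + 1) with hq'def
      have hq' : q'.natDegree ≤ d := by
        rw [natDegree_le_iff_coeff_eq_zero]
        intro j hj
        have hcoef : q'.coeff j = q.coeff j - c * (R (d+1)).coeff j := by
          simp [hq'def, coeff_C_mul]
        rcases eq_or_lt_of_le (Nat.succ_le_of_lt hj) with h | h
        · rw [hcoef, ← h]
          have : (R (d+1)).coeff (d+1) = 1 := by
            have := (hRm (d+1)).coeff_natDegree
            rwa [hRd (d+1)] at this
          rw [this, mul_one, hc, sub_self]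
        · rw [hcoef, coeff_eq_zero_of_natDegree_lt (by omega),
            coeff_eq_zero_of_natDegree_lt (by rw [hRd]; omega), mul_zero, sub_zero]
      have hsplit : f * q = f * q' + C c * (f * R (d+1)) := by
        rw [hq'def]; ring
      rw [hsplit, Ip_add hcs, Ip_Cmul, hor (d+1) (by omega), mul_zero, add_zero]
      exact ih N (by omega) hor q' hq'
  intro N hor q hq
  exact key N N le_rfl hor q hq


lemma Iop [IsProbabilityMeasure ρ] {P : ℕ → ℝ[X]} (hP : IsMonicOPS ρ P) {n m : ℕ}
    (h : n ≠ m) : ∫ x, (P n * P m).eval x ∂ρ = 0 := by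
  simpa [eval_mul] using hP.2.2 n m h

lemma isq_ne_zero [IsProbabilityMeasure ρ] (hcs : CompactSupp ρ)
    (hinf : (msupport ρ).Infinite) {p : ℝ[X]} (hp : p ≠ 0) :
    ∫ x, (p * p).eval x ∂ρ ≠ 0 :=
  fun h => hp (poly_eq_zero_of_integral_sq hcs hinf p h)

lemma ops_zero {P : ℕ → ℝ[X]} (hm : (P 0).Monic) (hd : (P 0).natDegree = 0) : P 0 = 1 :=
  hm.natDegree_eq_zero.mp hd

/-- Uniqueness of monic orthogonal polynomials. -/
lemma ops_unique [IsProbabilityMeasure ρ] (hcs : CompactSupp ρ)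
    (hinf : (msupport ρ).Infinite) {P : ℕ → ℝ[X]} (hP : IsMonicOPS ρ P)
    (Q : ℕ → ℝ[X]) (hQm : ∀ n, (Q n).Monic) (hQd : ∀ n, (Q n).natDegree = n)
    (hQo : ∀ n m, m < n → ∫ x, ((X : ℝ[X]) ^ m * Q n).eval x ∂ρ = 0) :
    ∀ n, P n = Q n := by
  obtain ⟨hPm, hPd, hPo⟩ := hP
  intro n
  rcases Nat.eq_zero_or_pos n with h0 | h0
  · subst h0
    rw [ops_zero (hPm 0) (hPd 0), ops_zero (hQm 0) (hQd 0)]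
  set D := P n - Q n with hD
  by_contra hne
  have hDne : D ≠ 0 := fun h => hne (sub_eq_zero.mp h)
  have hDdeg : D.natDegree ≤ n - 1 := by
    rw [natDegree_le_iff_coeff_eq_zero]
    intro j hj
    have hj' : n ≤ j := by omega
    rcases eq_or_lt_of_le hj' with h | h
    · have h1 : (P n).coeff j = 1 := by
        rw [← h]; have := (hPm n).coeff_natDegree; rwa [hPd n] at this
      have h2 : (Q n).coeff j = 1 := by
        rw [← h]; have := (hQm n).coeff_natDegree; rwa [hQd n] at this
      simp [hD, h1, h2]
    · have h1 : (P n).coeff j = 0 := coeff_eq_zero_of_natDegree_lt (by rw [hPd]; omega)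
      have h2 : (Q n).coeff j = 0 := coeff_eq_zero_of_natDegree_lt (by rw [hQd]; omega)
      simp [hD, h1, h2]
  have h1 : ∫ x, (P n * D).eval x ∂ρ = 0 := by
    refine ortho_of_ortho_family hcs P hPm hPd (P n) (n-1) (fun k hk => ?_) D hDdeg
    exact Iop ⟨hPm, hPd, hPo⟩ (by omega)
  have h2 : ∫ x, (Q n * D).eval x ∂ρ = 0 := by
    refine ortho_of_ortho_family hcs (fun k => X ^ k) (fun k => monic_X_pow k)
      (fun k => natDegree_X_pow k) (Q n) (n-1) (fun k hk => ?_) D hDdeg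
    rw [mul_comm]
    exact hQo n k (by omega)
  have hsq : ∫ x, (D * D).eval x ∂ρ = 0 := by
    have hexp : D * D = P n * D - Q n * D := by rw [hD]; ring
    rw [hexp, Ip_sub hcs, h1, h2, sub_zero]
  exact isq_ne_zero hcs hinf hDne hsq

/-- Existence of the three-term recurrence. -/
lemma ops_recurrence [IsProbabilityMeasure ρ] (hcs : CompactSupp ρ)
    (hinf : (msupport ρ).Infinite) {P : ℕ → ℝ[X]} (hP : IsMonicOPS ρ P) :
    ∃ b a : ℕ → ℝ, P 1 = X - C (b 0) ∧
      ∀ n, 1 ≤ n → X * P n = P (n+1) + C (b n) * P n + C (a n) * P (n-1) := by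
  obtain ⟨hPm, hPd, hPo⟩ := hP
  have hP' : IsMonicOPS ρ P := ⟨hPm, hPd, hPo⟩
  have hP0 : P 0 = 1 := ops_zero (hPm 0) (hPd 0)
  have hne : ∀ k, ∫ x, (P k * P k).eval x ∂ρ ≠ 0 :=
    fun k => isq_ne_zero hcs hinf (hPm k).ne_zero
  refine ⟨fun n => (∫ x, (X * P n * P n).eval x ∂ρ) / (∫ x, (P n * P n).eval x ∂ρ),
    fun n => (∫ x, (X * P n * P (n-1)).eval x ∂ρ) / (∫ x, (P (n-1) * P (n-1)).eval x ∂ρ),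
    ?_, ?_⟩
  · -- P 1 = X - C (b 0)
    obtain ⟨c, hP1⟩ : ∃ c, P 1 = X + C c := ⟨_, (hPm 1).eq_X_add_C (hPd 1)⟩
    have hint : ∫ x, (P 1 * P 0).eval x ∂ρ = 0 := Iop hP' (by omega)
    have hden : ∫ x, (P 0 * P 0).eval x ∂ρ = 1 := by
      rw [hP0]; simp
    have hnum : ∫ x, (X * P 0 * P 0).eval x ∂ρ = - c := by
      have hXeq : (X : ℝ[X]) * P 0 * P 0 = (P 1 * P 0) - (C c * P 0) := by
        rw [hP0, hP1]; ring
      rw [hXeq, Ip_sub hcs, hint, Ip_Cmul, hP0]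
      simp
    show P 1 = X - C ((∫ x, (X * P 0 * P 0).eval x ∂ρ) / (∫ x, (P 0 * P 0).eval x ∂ρ))
    rw [hnum, hden, hP1, div_one, map_neg, sub_neg_eq_add]
  · intro n hn
    set bn := (∫ x, (X * P n * P n).eval x ∂ρ) / (∫ x, (P n * P n).eval x ∂ρ) with hbn
    set an := (∫ x, (X * P n * P (n-1)).eval x ∂ρ) /
      (∫ x, (P (n-1) * P (n-1)).eval x ∂ρ) with han
    set D := X * P n - P (n+1) - C bn * P n - C an * P (n-1) with hD
    have hexp : ∀ k, D * P k = X * P n * P k - P (n+1) * P k - C bn * (P n * P k)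
        - C an * (P (n-1) * P k) := by intro k; rw [hD]; ring
    have hIexp : ∀ k, ∫ x, (D * P k).eval x ∂ρ
        = ∫ x, (X * P n * P k).eval x ∂ρ - ∫ x, (P (n+1) * P k).eval x ∂ρ
          - bn * ∫ x, (P n * P k).eval x ∂ρ - an * ∫ x, (P (n-1) * P k).eval x ∂ρ := by
      intro k
      rw [hexp k, Ip_sub hcs, Ip_sub hcs, Ip_sub hcs, Ip_Cmul, Ip_Cmul]
    have hDk : ∀ k ≤ n, ∫ x, (D * P k).eval x ∂ρ = 0 := by
      intro k hk
      rcases eq_or_ne k n with h | hkn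
      · rw [h, hIexp, Iop hP' (by omega : n + 1 ≠ n), Iop hP' (by omega : n - 1 ≠ n), hbn,
          div_mul_cancel₀ _ (hne n)]
        ring
      rcases eq_or_ne k (n-1) with h | hkn1
      · rw [h, hIexp, Iop hP' (by omega : n + 1 ≠ n - 1), Iop hP' (by omega : n ≠ n - 1), han,
          div_mul_cancel₀ _ (hne (n-1))]
        ring
      · have hklt : k + 1 < n := by omega
        have hfirst : ∫ x, (X * P n * P k).eval x ∂ρ = 0 := by
          have hcomm : X * P n * P k = P n * (X * P k) := by ring
          rw [hcomm]
          refine ortho_of_ortho_family hcs P hPm hPd (P n) (n-1) (fun j hj => ?_)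
            (X * P k) ?_
          · exact Iop hP' (by omega)
          · have : (X * P k).natDegree = k + 1 := by
              rw [natDegree_mul X_ne_zero (hPm k).ne_zero, natDegree_X, hPd]
              omega
            omega
        rw [hIexp, hfirst, Iop hP' (by omega : n + 1 ≠ k), Iop hP' (by omega : n ≠ k),
          Iop hP' (by omega : n - 1 ≠ k)]
        ring
    have hDdeg : D.natDegree ≤ n := by
      rw [natDegree_le_iff_coeff_eq_zero]
      intro j hj
      obtain ⟨j', rfl⟩ : ∃ j', j = j' + 1 := ⟨j - 1, by omega⟩
      have hXP : (X * P n).coeff (j'+1) = (P n).coeff j' := coeff_X_mul _ _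
      have hc1 : (C bn * P n).coeff (j'+1) = 0 := by
        rw [coeff_C_mul, coeff_eq_zero_of_natDegree_lt (by rw [hPd]; omega), mul_zero]
      have hc2 : (C an * P (n-1)).coeff (j'+1) = 0 := by
        rw [coeff_C_mul, coeff_eq_zero_of_natDegree_lt (by rw [hPd]; omega), mul_zero]
      rcases eq_or_lt_of_le (show n + 1 ≤ j' + 1 by omega) with h | h
      · have h1 : (P n).coeff j' = 1 := by
          have : j' = n := by omega
          rw [this]
          have := (hPm n).coeff_natDegree; rwa [hPd n] at this
        have h2 : (P (n+1)).coeff (j'+1) = 1 := by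
          have : j' + 1 = n + 1 := by omega
          rw [this]
          have := (hPm (n+1)).coeff_natDegree; rwa [hPd (n+1)] at this
        simp [hD, hXP, h1, h2, hc1, hc2]
      · have h1 : (P n).coeff j' = 0 := coeff_eq_zero_of_natDegree_lt (by rw [hPd]; omega)
        have h2 : (P (n+1)).coeff (j'+1) = 0 :=
          coeff_eq_zero_of_natDegree_lt (by rw [hPd]; omega)
        simp [hD, hXP, h1, h2, hc1, hc2]
    have hsq : ∫ x, (D * D).eval x ∂ρ = 0 :=
      ortho_of_ortho_family hcs P hPm hPd D n hDk D hDdeg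
    have hD0 : D = 0 := poly_eq_zero_of_integral_sq hcs hinf D hsq
    have : X * P n - P (n+1) - C bn * P n - C an * P (n-1) = 0 := by rw [← hD]; exact hD0
    linear_combination this

/-- The moments of a measure are computed from the recurrence coefficients. -/
lemma int_pow_mul_ops [IsProbabilityMeasure ρ] (hcs : CompactSupp ρ)
    {P : ℕ → ℝ[X]} (hP : IsMonicOPS ρ P) (b a : ℕ → ℝ)
    (h1 : P 1 = X - C (b 0))
    (hr : ∀ n, 1 ≤ n → X * P n = P (n+1) + C (b n) * P n + C (a n) * P (n-1)) :
    ∀ m n, ∫ x, ((X : ℝ[X]) ^ m * P n).eval x ∂ρ = favG b a m n := by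
  obtain ⟨hPm, hPd, hPo⟩ := hP
  have hP0 : P 0 = 1 := ops_zero (hPm 0) (hPd 0)
  intro m
  induction m with
  | zero =>
    intro n
    rw [pow_zero, one_mul, favG_zero]
    rcases eq_or_ne n 0 with rfl | hn
    · rw [hP0, if_pos rfl]; simp
    · rw [if_neg hn]
      have := hPo n 0 hn
      rw [hP0] at this
      simpa using this
  | succ m ih =>
    intro n
    have hsplit : (X : ℝ[X]) ^ (m+1) * P n = X ^ m * (X * P n) := by ring
    rcases Nat.eq_zero_or_pos n with rfl | hn
    · have hx : (X : ℝ[X]) * P 0 = P 1 + C (b 0) * P 0 := by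
        rw [hP0, h1]; ring
      rw [hsplit, hx, mul_add, Ip_add hcs, favG_succ]
      have : (X:ℝ[X])^m * (C (b 0) * P 0) = C (b 0) * (X^m * P 0) := by ring
      rw [this, Ip_Cmul, ih 1, ih 0]
      simp
    · rw [hsplit, hr n hn, mul_add, mul_add, Ip_add hcs, Ip_add hcs, favG_succ]
      have e1 : (X:ℝ[X])^m * (C (b n) * P n) = C (b n) * (X^m * P n) := by ring
      have e2 : (X:ℝ[X])^m * (C (a n) * P (n-1)) = C (a n) * (X^m * P (n-1)) := by ring
      rw [e1, e2, Ip_Cmul, Ip_Cmul, ih (n+1), ih n, ih (n-1), if_neg (by omega)]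

/-- Conversely: if the moments of `ρ` are given by `favG b a`, then the `favP b a` are
orthogonal to lower monomials. -/
lemma int_pow_mul_favP [IsProbabilityMeasure ρ] (hcs : CompactSupp ρ) (b a : ℕ → ℝ)
    (hmom : ∀ m, mom ρ m = favG b a m 0) :
    ∀ n m, ∫ x, ((X : ℝ[X]) ^ m * favP b a n).eval x ∂ρ = favG b a m n := by
  intro n
  induction n using Nat.twoStepInduction with
  | zero =>
    intro m
    rw [favP_zero, mul_one, int_pow, hmom]
  | one =>
    intro m
    rw [favP_one, mul_sub, Ip_sub hcs]
    have e1 : (X:ℝ[X])^m * X = X^(m+1) := by ring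
    have e2 : (X:ℝ[X])^m * C (b 0) = C (b 0) * X^m := by ring
    rw [e1, e2, Ip_Cmul, int_pow, int_pow, hmom, hmom, favG_succ]
    simp
  | more n ih2 ih1 =>
    intro m
    rw [favP_add_two]
    have hexp : (X:ℝ[X])^m * ((X - C (b (n+1))) * favP b a (n+1) - C (a (n+1)) * favP b a n)
        = X^(m+1) * favP b a (n+1) - C (b (n+1)) * (X^m * favP b a (n+1))
          - C (a (n+1)) * (X^m * favP b a n) := by ring
    rw [hexp, Ip_sub hcs, Ip_sub hcs, Ip_Cmul, Ip_Cmul, ih1 (m+1), ih1 m, ih2 m,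
      favG_succ, if_neg (by omega)]
    simp only [Nat.add_sub_cancel]
    ring

end Stmt18

open Stmt18 in
theorem stmt18 (τ ν μ : Measure ℝ)
    [IsProbabilityMeasure τ] [IsProbabilityMeasure ν] [IsProbabilityMeasure μ]
    (hcsτ : CompactSupp τ) (hcsν : CompactSupp ν) (hcsμ : CompactSupp μ)
    (hinfτ : (msupport τ).Infinite) (hinfν : (msupport ν).Infinite)
    (hinfμ : (msupport μ).Infinite)
    (β β₀ : ℝ) (γ γ₁ : ℝ) (hγ : 0 < γ) (hγ₁ : 0 < γ₁)
    (hν : JacobiShift β₀ γ₁ (mom τ) (mom ν))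
    (hμ : JacobiShift β γ (mom ν) (mom μ))
    (Pμ Pν Pτ : ℕ → Polynomial ℝ)
    (hPμ : IsMonicOPS μ Pμ) (hPν : IsMonicOPS ν Pν) (hPτ : IsMonicOPS τ Pτ) :
    ∀ n : ℕ, 1 ≤ n →
      X * Pν n = Pμ (n + 1) + C β * Pν n + C γ * Pτ (n - 1) := by
  classical
  obtain ⟨bt, at', ht1, htr⟩ := ops_recurrence hcsτ hinfτ hPτ
  have hPτ0 : Pτ 0 = 1 := ops_zero (hPτ.1 0) (hPτ.2.1 0)
  have hmomτ : ∀ m, mom τ m = favG bt at' m 0 := by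
    intro m
    have h := int_pow_mul_ops hcsτ hPτ bt at' ht1 htr m 0
    rw [hPτ0, mul_one] at h
    rw [← h, mom]
    simp
  set bn' : ℕ → ℝ := prepb β₀ bt with hbn'
  set an' : ℕ → ℝ := prepa γ₁ at' with han'
  have hJν : JacobiShift β₀ γ₁ (mom τ) (fun k => favG bn' an' k 0) := by
    have h := favG_jacobi bt at' β₀ γ₁
    have he : (fun k => favG bt at' k 0) = mom τ := funext fun m => (hmomτ m).symm
    rwa [he] at h
  have hmomν : ∀ m, mom ν m = favG bn' an' m 0 := by
    refine jacobiShift_unique β₀ γ₁ (mom τ) _ _ ?_ hν hJν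
    rw [mom_zero, favG_zero, if_pos rfl]
  have hνortho : ∀ n m, m < n → ∫ x, ((X : ℝ[X]) ^ m * favP bn' an' n).eval x ∂ν = 0 := by
    intro n m h
    rw [int_pow_mul_favP hcsν bn' an' hmomν n m, favG_eq_zero bn' an' m n h]
  have hPνeq : ∀ n, Pν n = favP bn' an' n :=
    ops_unique hcsν hinfν hPν (favP bn' an') (fun n => (favP_monic_deg bn' an' n).1)
      (fun n => (favP_monic_deg bn' an' n).2) hνortho
  set bm : ℕ → ℝ := prepb β bn' with hbm
  set am : ℕ → ℝ := prepa γ an' with ham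
  have hJμ : JacobiShift β γ (mom ν) (fun k => favG bm am k 0) := by
    have h := favG_jacobi bn' an' β γ
    have he : (fun k => favG bn' an' k 0) = mom ν := funext fun m => (hmomν m).symm
    rwa [he] at h
  have hmomμ : ∀ m, mom μ m = favG bm am m 0 := by
    refine jacobiShift_unique β γ (mom ν) _ _ ?_ hμ hJμ
    rw [mom_zero, favG_zero, if_pos rfl]
  have hμortho : ∀ n m, m < n → ∫ x, ((X : ℝ[X]) ^ m * favP bm am n).eval x ∂μ = 0 := by
    intro n m h
    rw [int_pow_mul_favP hcsμ bm am hmomμ n m, favG_eq_zero bm am m n h]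
  have hPμeq : ∀ n, Pμ n = favP bm am n :=
    ops_unique hcsμ hinfμ hPμ (favP bm am) (fun n => (favP_monic_deg bm am n).1)
      (fun n => (favP_monic_deg bm am n).2) hμortho
  have hPτeq : ∀ n, Pτ n = favP bt at' n := by
    intro n
    induction n using Nat.twoStepInduction with
    | zero => rw [hPτ0, favP_zero]
    | one => rw [ht1, favP_one]
    | more n ih2 ih1 =>
      have h := htr (n+1) (by omega)
      simp only [Nat.add_sub_cancel] at h
      rw [ih1, ih2] at h
      rw [favP_add_two]
      linear_combination -h
  intro n hn
  obtain ⟨k, rfl⟩ : ∃ k, n = k + 1 := ⟨n - 1, by omega⟩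
  have h := favP_assoc bt at' β γ β₀ γ₁ k
  rw [← hbn', ← han', ← hbm, ← ham] at h
  rw [hPνeq (k+1), hPμeq (k+1+1), hPτeq (k+1-1)]
  simp only [Nat.add_sub_cancel]
  linear_combination -h
end
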